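/- arXiv:1912.06336 — 3 statements merged into one kernel-verified Lean document; each statement's English description precedes it below -/
import Mathlib

section
/- Let m, n ≥ 1 and let S ⊆ 𝔽₂ⁿ. For (t, b) ∈ 𝔽₂^{m+n−1} × 𝔽₂ᵐ write c_{t,b}(S) = |{x ∈ S : h_{t,b}(x) = 0^m}|. Then Σ_{(t,b)} (c_{t,b}(S) − |S|/2^m)² ≤ (|S|/2^m) · 2^{n+2m−1}; equivalently, the variance of c_{t,b}(S) over uniformly random (t, b) is at most |S|/2^m. -/
/-!
For fixed `x` the map `(t, b) ↦ h_{t,b}(x)` is a surjective additive map, and for `x ≠ y` so is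
`(t, b) ↦ (h_{t,b}(x), h_{t,b}(y))`: the offset `b` takes care of one coordinate, and
`t ↦ A_t (x - y)` is onto because `(A_t z)_i` is the coefficient of `X^{i+n-1}` in `T·Z`
(`T`, `Z` the power series with coefficient vectors `t`, `z`), while a nonzero `Z` of order
`≤ n - 1` divides `X^{n-1}` in `𝔽₂⟦X⟧`. All fibres of a surjective homomorphism have the same
size, so the events `h_{t,b}(x) = 0` have probability `2^{-m}` and are pairwise independent.
The variance of a sum of pairwise independent indicators is the sum of their variances,
`|S| 2^{-m} (1 - 2^{-m}) ≤ |S| / 2^m`.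
-/

/-- The `m × n` Toeplitz matrix over `𝔽₂` determined by the vector
`t ∈ 𝔽₂^{m+n-1}` recording its first row and first column:
entry `(i, j)` is `t (i + (n-1) - j)`, so that `a_{i,j} = a_{i+1,j+1}`. -/
def toeplitz (m n : ℕ) (t : Fin (m + n - 1) → ZMod 2) :
    Matrix (Fin m) (Fin n) (ZMod 2) :=
  Matrix.of fun i j => t ⟨i.val + (n - 1) - j.val, by
    have hi := i.isLt; have hj := j.isLt; omega⟩

/-- The Toeplitz hash function `h_{t,b}(x) = A_t x + b`. -/
def hashTB (m n : ℕ) (t : Fin (m + n - 1) → ZMod 2) (b : Fin m → ZMod 2)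
    (x : Fin n → ZMod 2) : Fin m → ZMod 2 :=
  (toeplitz m n t).mulVec x + b

open Finset PowerSeries Matrix

theorem AddMonoidHom.card_fiber_mul_card_of_surjective {G H : Type*} [AddGroup G] [AddGroup H]
    [Fintype G] [Fintype H] [DecidableEq H] (f : G →+ H) (hf : Function.Surjective f) (h : H) :
    #{g | f g = h} * Fintype.card H = Fintype.card G := by
  have hfiber : #{g | f g = h} = Nat.card f.ker := by
    rw [← Fintype.card_subtype, ← Nat.card_eq_fintype_card]
    exact Nat.card_congr (f.fiberEquivKerOfSurjective hf h)
  rw [hfiber, ← Nat.card_eq_fintype_card, ← Nat.card_eq_fintype_card, ← f.ker.card_mul_index,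
    AddSubgroup.index_ker, f.range_eq_top.2 hf, AddSubgroup.card_top]

theorem natCast_card_filter_and {R P : Type*} [NonAssocSemiring R] [Fintype P] (E F : P → Prop)
    [DecidablePred E] [DecidablePred F] :
    ((#{p | E p ∧ F p} : ℕ) : R) = ∑ p, (if E p then 1 else 0) * (if F p then 1 else 0) := by
  rw [natCast_card_filter]
  refine sum_congr rfl fun p _ => ?_
  split_ifs <;> simp_all

theorem sum_boole_sub_mul_boole_sub {R P : Type*} [CommRing R] [Fintype P] (E F : P → Prop)
    [DecidablePred E] [DecidablePred F] (c : R) :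
    ∑ p, ((if E p then 1 else 0) - c) * ((if F p then 1 else 0) - c)
      = (#{p | E p ∧ F p} : R) - c * (#{p | E p} + #{p | F p}) + Fintype.card P * c ^ 2 := by
  rw [natCast_card_filter_and, natCast_card_filter, natCast_card_filter, ← card_univ,
    ← nsmul_eq_mul, ← sum_const, mul_add, mul_sum, mul_sum, ← sum_add_distrib, ← sum_sub_distrib,
    ← sum_add_distrib]
  exact sum_congr rfl fun p _ => by ring

theorem sum_sq_card_filter_sub_le {𝕜 P α : Type*} [Field 𝕜] [LinearOrder 𝕜]
    [IsStrictOrderedRing 𝕜] [Fintype P] (E : P → α → Prop) [∀ p x, Decidable (E p x)]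
    (S : Finset α) (K : 𝕜)
    (h1 : ∀ x ∈ S, (#{p | E p x} : 𝕜) = Fintype.card P / K)
    (h2 : ∀ x ∈ S, ∀ y ∈ S, x ≠ y → (#{p | E p x ∧ E p y} : 𝕜) ≤ Fintype.card P / K ^ 2) :
    ∑ p, ((#(S.filter (E p)) : 𝕜) - #S / K) ^ 2 ≤ #S / K * Fintype.card P := by
  classical
  set ι : P → α → 𝕜 := fun p x => if E p x then 1 else 0
  have hdev : ∀ p, (#(S.filter (E p)) : 𝕜) - #S / K = ∑ x ∈ S, (ι p x - 1 / K) := fun p => by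
    rw [natCast_card_filter, sum_sub_distrib, sum_const, nsmul_eq_mul, mul_one_div]
  have hcov : ∀ x ∈ S, ∀ y ∈ S, ∑ p, (ι p x - 1 / K) * (ι p y - 1 / K)
      ≤ if x = y then (Fintype.card P : 𝕜) / K else 0 := by
    intro x hx y hy
    rw [sum_boole_sub_mul_boole_sub, h1 x hx, h1 y hy]
    set N : 𝕜 := (Fintype.card P : 𝕜)
    have hN : 0 ≤ N / K ^ 2 := by positivity
    have hcross : 1 / K * (N / K + N / K) = 2 * (N / K ^ 2) := by ring
    have hconst : N * (1 / K) ^ 2 = N / K ^ 2 := by ring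
    split_ifs with hxy
    · subst hxy
      simp only [and_self, h1 x hx]
      linarith
    · linarith [h2 x hx y hy hxy]
  calc ∑ p, ((#(S.filter (E p)) : 𝕜) - #S / K) ^ 2
      = ∑ x ∈ S, ∑ y ∈ S, ∑ p, (ι p x - 1 / K) * (ι p y - 1 / K) := by
        simp_rw [hdev, sq, sum_mul_sum]
        rw [sum_comm]
        exact sum_congr rfl fun _ _ => sum_comm
    _ ≤ ∑ x ∈ S, ∑ y ∈ S, if x = y then (Fintype.card P : 𝕜) / K else 0 :=
        sum_le_sum fun x hx => sum_le_sum fun y hy => hcov x hx y hy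
    _ = #S / K * Fintype.card P := by
        rw [sum_congr rfl fun x hx => by rw [sum_ite_eq, if_pos hx], sum_const, nsmul_eq_mul]
        ring

noncomputable def finPowerSeries {R : Type*} [Semiring R] {n : ℕ} (v : Fin n → R) : R⟦X⟧ :=
  ∑ j, C (v j) * X ^ (j : ℕ)

theorem coeff_finPowerSeries {R : Type*} [Semiring R] {n : ℕ} (v : Fin n → R) (j : Fin n) :
    coeff j (finPowerSeries v) = v j := by
  simp [finPowerSeries, coeff_X_pow, Fin.val_inj]

theorem PowerSeries.dvd_X_pow_of_order_le {k : Type*} [Field k] {f : k⟦X⟧} (hf : f ≠ 0) {d : ℕ}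
    (h : f.order ≤ d) : f ∣ X ^ d := by
  have hv : f.order.toNat ≤ d := ENat.toNat_le_of_le_natCast h
  calc f = X ^ f.order.toNat * divXPowOrder f := X_pow_order_mul_divXPowOrder.symm
    _ ∣ X ^ f.order.toNat * X ^ (d - f.order.toNat) :=
        mul_dvd_mul_left _ (isUnit_divided_by_X_pow_order hf).dvd
    _ = X ^ d := by rw [← pow_add, Nat.add_sub_cancel' hv]

theorem toeplitz_add (m n : ℕ) (s t : Fin (m + n - 1) → ZMod 2) :
    toeplitz m n (s + t) = toeplitz m n s + toeplitz m n t :=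
  rfl

theorem toeplitz_mulVec_apply_eq_coeff (m n : ℕ) (T : (ZMod 2)⟦X⟧) (z : Fin n → ZMod 2)
    (i : Fin m) :
    (toeplitz m n (fun k => coeff k T) *ᵥ z) i = coeff (i + (n - 1)) (T * finPowerSeries z) := by
  simp only [finPowerSeries, mul_sum, map_sum, Matrix.mulVec, dotProduct, toeplitz,
    Matrix.of_apply]
  refine sum_congr rfl fun j _ => ?_
  rw [mul_left_comm, coeff_C_mul, coeff_mul_X_pow', if_pos (by omega), mul_comm]

theorem toeplitz_mulVec_surjective (m : ℕ) {n : ℕ} {z : Fin n → ZMod 2} (hz : z ≠ 0) :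
    Function.Surjective fun t => toeplitz m n t *ᵥ z := by
  intro w
  obtain ⟨j, hj⟩ : ∃ j, z j ≠ 0 := Function.ne_iff.1 hz
  have hZ : finPowerSeries z ≠ 0 := fun h => hj (by rw [← coeff_finPowerSeries z j, h, map_zero])
  have hord : (finPowerSeries z).order ≤ (n - 1 : ℕ) :=
    (order_le j (by rwa [coeff_finPowerSeries])).trans (by exact_mod_cast (by omega))
  obtain ⟨Q, hQ⟩ := dvd_X_pow_of_order_le hZ hord
  refine ⟨fun k => coeff k (Q * finPowerSeries w), funext fun i => ?_⟩
  dsimp only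
  rw [toeplitz_mulVec_apply_eq_coeff m n,
    show Q * finPowerSeries w * finPowerSeries z = X ^ (n - 1) * finPowerSeries w by
      rw [hQ]; ring,
    coeff_X_pow_mul, coeff_finPowerSeries]

def hashHom (m n : ℕ) (x : Fin n → ZMod 2) :
    (Fin (m + n - 1) → ZMod 2) × (Fin m → ZMod 2) →+ (Fin m → ZMod 2) :=
  AddMonoidHom.mk' (fun p => hashTB m n p.1 p.2 x) fun p q => by
    simp only [hashTB, Prod.fst_add, Prod.snd_add, toeplitz_add, add_mulVec]
    abel

theorem hashHom_apply (m n : ℕ) (x : Fin n → ZMod 2)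
    (p : (Fin (m + n - 1) → ZMod 2) × (Fin m → ZMod 2)) :
    hashHom m n x p = hashTB m n p.1 p.2 x :=
  rfl

theorem card_toeplitzParams (m n : ℕ) :
    Fintype.card ((Fin (m + n - 1) → ZMod 2) × (Fin m → ZMod 2)) = 2 ^ (n + 2 * m - 1) := by
  rw [Fintype.card_prod, Fintype.card_fun, Fintype.card_fun, ZMod.card, Fintype.card_fin,
    Fintype.card_fin, ← pow_add]
  congr 1
  omega

theorem card_hashTB_eq_zero_mul (m n : ℕ) (x : Fin n → ZMod 2) :
    #{p : (Fin (m + n - 1) → ZMod 2) × (Fin m → ZMod 2) | hashTB m n p.1 p.2 x = 0} * 2 ^ m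
      = 2 ^ (n + 2 * m - 1) := by
  have hsurj : Function.Surjective (hashHom m n x) := fun u =>
    ⟨(0, u - toeplitz m n 0 *ᵥ x), add_sub_cancel _ _⟩
  have h := (hashHom m n x).card_fiber_mul_card_of_surjective hsurj 0
  rwa [card_toeplitzParams, Fintype.card_fun, ZMod.card, Fintype.card_fin] at h

theorem card_hashTB_eq_zero_and_mul (m n : ℕ) {x y : Fin n → ZMod 2} (hxy : x ≠ y) :
    #{p : (Fin (m + n - 1) → ZMod 2) × (Fin m → ZMod 2) |
        hashTB m n p.1 p.2 x = 0 ∧ hashTB m n p.1 p.2 y = 0} * (2 ^ m) ^ 2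
      = 2 ^ (n + 2 * m - 1) := by
  have hsurj : Function.Surjective ((hashHom m n x).prod (hashHom m n y)) := by
    rintro ⟨u, v⟩
    obtain ⟨t, ht⟩ := toeplitz_mulVec_surjective m (sub_ne_zero.2 hxy) (u - v)
    refine ⟨(t, u - toeplitz m n t *ᵥ x), Prod.ext (add_sub_cancel _ _) ?_⟩
    simp only [mulVec_sub] at ht
    show toeplitz m n t *ᵥ y + (u - toeplitz m n t *ᵥ x) = v
    rw [← sub_sub_cancel u v, ← ht]
    abel
  have h := ((hashHom m n x).prod (hashHom m n y)).card_fiber_mul_card_of_surjective hsurj 0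
  simp only [AddMonoidHom.prod_apply, Prod.mk_eq_zero, hashHom_apply] at h
  rwa [card_toeplitzParams, Fintype.card_prod, Fintype.card_fun, ZMod.card, Fintype.card_fin,
    ← sq] at h

theorem toeplitz_count_variance_general (m n : ℕ) (S : Finset (Fin n → ZMod 2)) :
    (∑ p : (Fin (m + n - 1) → ZMod 2) × (Fin m → ZMod 2),
        (((S.filter (fun x => hashTB m n p.1 p.2 x = 0)).card : ℝ)
          - (S.card : ℝ) / 2 ^ m) ^ 2)
      ≤ ((S.card : ℝ) / 2 ^ m) * 2 ^ (n + 2 * m - 1) ∧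
    (∑ p : (Fin (m + n - 1) → ZMod 2) × (Fin m → ZMod 2),
        (((S.filter (fun x => hashTB m n p.1 p.2 x = 0)).card : ℝ)
          - (S.card : ℝ) / 2 ^ m) ^ 2) / 2 ^ (n + 2 * m - 1)
      ≤ (S.card : ℝ) / 2 ^ m := by
  have hP : (Fintype.card ((Fin (m + n - 1) → ZMod 2) × (Fin m → ZMod 2)) : ℝ)
      = 2 ^ (n + 2 * m - 1) := by
    exact_mod_cast card_toeplitzParams m n
  have key := sum_sq_card_filter_sub_le
    (fun (p : (Fin (m + n - 1) → ZMod 2) × (Fin m → ZMod 2)) x => hashTB m n p.1 p.2 x = 0)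
    S (2 ^ m : ℝ)
    (fun x _ => by
      rw [hP]
      exact eq_div_of_mul_eq (by positivity) (by exact_mod_cast card_hashTB_eq_zero_mul m n x))
    (fun x _ y _ hxy => by
      rw [hP]
      exact (eq_div_of_mul_eq (by positivity)
        (by exact_mod_cast card_hashTB_eq_zero_and_mul m n hxy)).le)
  rw [hP] at key
  exact ⟨key, (div_le_iff₀ (by positivity)).2 key⟩

/-- For `S ⊆ 𝔽₂ⁿ` and `c_{t,b}(S) = |{x ∈ S : h_{t,b}(x) = 0}|`, we have
`Σ_{(t,b)} (c_{t,b}(S) − |S|/2^m)² ≤ (|S|/2^m) · 2^(n+2m-1)`; equivalently,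
the variance of `c_{t,b}(S)` over uniformly random `(t, b)` is at most
`|S| / 2^m`. -/
theorem toeplitz_count_variance (m n : ℕ) (hm : 1 ≤ m) (hn : 1 ≤ n)
    (S : Finset (Fin n → ZMod 2)) :
    (∑ p : (Fin (m + n - 1) → ZMod 2) × (Fin m → ZMod 2),
        (((S.filter (fun x => hashTB m n p.1 p.2 x = 0)).card : ℝ)
          - (S.card : ℝ) / 2 ^ m) ^ 2)
      ≤ ((S.card : ℝ) / 2 ^ m) * 2 ^ (n + 2 * m - 1) ∧
    (∑ p : (Fin (m + n - 1) → ZMod 2) × (Fin m → ZMod 2),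
        (((S.filter (fun x => hashTB m n p.1 p.2 x = 0)).card : ℝ)
          - (S.card : ℝ) / 2 ^ m) ^ 2) / 2 ^ (n + 2 * m - 1)
      ≤ (S.card : ℝ) / 2 ^ m :=
  toeplitz_count_variance_general m n S
end

section
/- Let m, n ≥ 1 and let S ⊆ 𝔽₂ⁿ satisfy |S| ≥ 2^{m+6}. For (t, b) ∈ 𝔽₂^{m+n−1} × 𝔽₂ᵐ write c_{t,b}(S) = |{x ∈ S : h_{t,b}(x) = 0^m}|. Then the fraction of pairs (t, b) with c_{t,b}(S) < 48 is at most 2^{m+4}/|S|, and in particular at most 1/4. -/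
/-!
For fixed `x`, the value `A_t x + b` is uniform on `𝔽₂ᵐ` because `b` is. For `x ≠ y`, the linear map
`t ↦ A_t (x - y)` is onto `𝔽₂ᵐ`: restricted to a suitable window of `t` it is triangular with the
last nonzero entry of `x - y` on the diagonal. So the events `h_{t,b}(x) = 0`, `x ∈ S`, are pairwise
independent of probability `2⁻ᵐ`, and `c_{t,b}(S)` has mean `μ = |S| / 2ᵐ ≥ 64` and variance at
most `μ`. Since `48 ≤ 3μ/4`, Chebyshev's inequality bounds the fraction of `(t, b)` with
`c_{t,b}(S) < 48` by `μ / (μ/4)² = 2^{m+4} / |S|`.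
-/

open Finset Function Matrix

section PairwiseIndependent

variable {ι P : Type*} [Fintype P] (E : ι → P → Prop) [DecidableRel E] (α : ℝ)

def centeredIndicator (x : ι) (p : P) : ℝ := (if E x p then 1 else 0) - α

theorem sum_centeredIndicator_mul (x y : ι) :
    ∑ p, centeredIndicator E α x p * centeredIndicator E α y p =
      #{p | E x p ∧ E y p} - α * #{p | E x p} - α * #{p | E y p} + α ^ 2 * Fintype.card P := by
  simp only [centeredIndicator, sub_mul, mul_sub, ite_zero_mul_ite_zero, mul_one, sum_sub_distrib,
    ← mul_sum, ← sum_mul, sum_const, card_univ, nsmul_eq_mul, sum_boole]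
  ring

variable {E α} {S : Finset ι}

theorem sum_sq_card_filter_sub_eq
    (h₁ : ∀ x ∈ S, (#{p | E x p} : ℝ) = α * Fintype.card P)
    (h₂ : ∀ x ∈ S, ∀ y ∈ S, x ≠ y → (#{p | E x p ∧ E y p} : ℝ) = α ^ 2 * Fintype.card P) :
    ∑ p, ((#{x ∈ S | E x p} : ℝ) - α * #S) ^ 2 = α * (1 - α) * #S * Fintype.card P := by
  have h_centered (p : P) :
      (#{x ∈ S | E x p} : ℝ) - α * #S = ∑ x ∈ S, centeredIndicator E α x p := by
    simp [centeredIndicator, sum_sub_distrib, sum_boole, mul_comm]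
  have h_orthogonal (x) (hx : x ∈ S) :
      ∑ y ∈ S, ∑ p, centeredIndicator E α x p * centeredIndicator E α y p =
        α * (1 - α) * Fintype.card P := by
    rw [sum_eq_single_of_mem x hx, sum_centeredIndicator_mul]
    · simp only [and_self, h₁ x hx]
      ring
    · intro y hy hyx
      rw [sum_centeredIndicator_mul, h₁ x hx, h₁ y hy, h₂ x hx y hy (Ne.symm hyx)]
      ring
  simp_rw [h_centered, sq, sum_mul_sum]
  rw [sum_comm, sum_congr rfl fun x _ => sum_comm]
  rw [sum_congr rfl h_orthogonal, sum_const, nsmul_eq_mul]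
  ring

theorem card_filter_le_sub_mul_sq_le {δ : ℝ} (hδ : 0 ≤ δ)
    (h₁ : ∀ x ∈ S, (#{p | E x p} : ℝ) = α * Fintype.card P)
    (h₂ : ∀ x ∈ S, ∀ y ∈ S, x ≠ y → (#{p | E x p ∧ E y p} : ℝ) = α ^ 2 * Fintype.card P) :
    #{p | (#{x ∈ S | E x p} : ℝ) ≤ α * #S - δ} * δ ^ 2 ≤ α * (1 - α) * #S * Fintype.card P := by
  rw [← sum_sq_card_filter_sub_eq h₁ h₂, ← nsmul_eq_mul]
  calc #{p | (#{x ∈ S | E x p} : ℝ) ≤ α * #S - δ} • δ ^ 2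
      ≤ ∑ p ∈ {p | (#{x ∈ S | E x p} : ℝ) ≤ α * #S - δ}, ((#{x ∈ S | E x p} : ℝ) - α * #S) ^ 2 :=
        card_nsmul_le_sum _ _ _ fun p hp => by
          rw [mem_filter] at hp
          nlinarith [hp.2]
    _ ≤ ∑ p, ((#{x ∈ S | E x p} : ℝ) - α * #S) ^ 2 :=
        sum_le_sum_of_subset_of_nonneg (subset_univ _) fun _ _ _ => sq_nonneg _

theorem card_filter_le_three_quarters_mul_le (hα : 0 ≤ α)
    (h₁ : ∀ x ∈ S, (#{p | E x p} : ℝ) = α * Fintype.card P)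
    (h₂ : ∀ x ∈ S, ∀ y ∈ S, x ≠ y → (#{p | E x p ∧ E y p} : ℝ) = α ^ 2 * Fintype.card P) :
    #{p | (#{x ∈ S | E x p} : ℝ) ≤ 3 / 4 * (α * #S)} * (α * #S) ≤ 16 * Fintype.card P := by
  have hchebyshev := card_filter_le_sub_mul_sq_le (δ := α * #S / 4) (by positivity) h₁ h₂
  rw [show α * #S - α * #S / 4 = 3 / 4 * (α * #S) by ring] at hchebyshev
  rcases (show 0 ≤ α * #S by positivity).eq_or_lt with hμ | hμ
  · simp [← hμ]
  refine le_of_mul_le_mul_right ?_ (show 0 < α * #S / 16 by positivity)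
  calc _ = #{p | (#{x ∈ S | E x p} : ℝ) ≤ 3 / 4 * (α * #S)} * (α * #S / 4) ^ 2 := by ring
    _ ≤ α * (1 - α) * #S * Fintype.card P := hchebyshev
    _ ≤ α * #S * Fintype.card P := by
      have : 0 ≤ α ^ 2 * #S * Fintype.card P := by positivity
      linarith
    _ = 16 * Fintype.card P * (α * #S / 16) := by ring

end PairwiseIndependent

theorem Fin.exists_last_ne_zero {M : Type*} [Zero M] {n : ℕ} {f : Fin n → M} (hf : f ≠ 0) :
    ∃ k, f k ≠ 0 ∧ ∀ j, k < j → f j = 0 := by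
  classical
  obtain ⟨j, hj⟩ := Function.ne_iff.mp hf
  obtain ⟨k, hk, hmax⟩ := exists_max_image {j | f j ≠ 0} id ⟨j, by simpa using hj⟩
  refine ⟨k, by simpa using hk, fun j hkj => ?_⟩
  by_contra hj
  exact (hmax j (by simpa using hj)).not_gt hkj

section Toeplitz

variable {m n : ℕ}

def toeplitzMulVecₗ (m n : ℕ) (z : Fin n → ZMod 2) :
    (Fin (m + n - 1) → ZMod 2) →ₗ[ZMod 2] (Fin m → ZMod 2) where
  toFun t := toeplitz m n t *ᵥ z
  map_add' t t' := by
    ext i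
    simp [toeplitz, mulVec, dotProduct, add_mul, sum_add_distrib]
  map_smul' c t := by
    ext i
    simp [toeplitz, mulVec, dotProduct, mul_sum, mul_assoc]

theorem toeplitzMulVecₗ_apply (z : Fin n → ZMod 2) (t : Fin (m + n - 1) → ZMod 2) (i : Fin m) :
    toeplitzMulVecₗ m n z t i =
      ∑ j : Fin n, t ⟨i.val + (n - 1) - j.val, by have := i.isLt; have := j.isLt; omega⟩ * z j :=
  rfl

/-- `t (windowEmb k i)` is the entry of `t` that row `i` of `toeplitz m n t *ᵥ z` multiplies
by `z k`. -/
def windowEmb (k : Fin n) (i : Fin m) : Fin (m + n - 1) :=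
  ⟨i + (n - 1 - k), by omega⟩

theorem windowEmb_injective (k : Fin n) : Injective (windowEmb (m := m) k) :=
  fun i i' h => Fin.ext (by simpa [windowEmb] using congrArg Fin.val h)

theorem toeplitzMulVecₗ_extend_windowEmb_apply {z : Fin n → ZMod 2} {k : Fin n}
    (hz : ∀ j, k < j → z j = 0) {u : Fin m → ZMod 2} {i₀ : Fin m} (hu : ∀ i, i₀ < i → u i = 0) :
    (toeplitzMulVecₗ m n z ∘ₗ ExtendByZero.linearMap (ZMod 2) (windowEmb k)) u i₀ = u i₀ * z k := by
  simp only [LinearMap.comp_apply, toeplitzMulVecₗ_apply, ExtendByZero.linearMap_apply]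
  rw [sum_eq_single k]
  · rw [show (⟨i₀ + (n - 1) - k, _⟩ : Fin (m + n - 1)) = windowEmb k i₀ from Fin.ext (by
      simp [windowEmb]; omega), (windowEmb_injective k).extend_apply]
  · intro j _ hjk
    rcases lt_or_gt_of_ne hjk with hj_lt | hk_lt
    · obtain ⟨i, hi⟩ | hout := em (∃ i : Fin m, windowEmb k i = ⟨i₀ + (n - 1) - j, by
        have := i₀.isLt; have := j.isLt; omega⟩)
      · have hi₀i : i₀ < i := by
          have := congrArg Fin.val hi
          simp only [windowEmb] at this
          rw [Fin.lt_def] at hj_lt ⊢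
          omega
        rw [← hi, (windowEmb_injective k).extend_apply, hu i hi₀i, zero_mul]
      · rw [extend_apply' _ _ _ hout, Pi.zero_apply, zero_mul]
    · rw [hz j hk_lt, mul_zero]
  · simp

theorem toeplitzMulVecₗ_surjective {z : Fin n → ZMod 2} (hz : z ≠ 0) :
    Surjective (toeplitzMulVecₗ m n z) := by
  obtain ⟨k, hzk, hk⟩ := Fin.exists_last_ne_zero hz
  suffices Injective (toeplitzMulVecₗ m n z ∘ₗ ExtendByZero.linearMap (ZMod 2) (windowEmb k)) from
    Surjective.of_comp (g := ExtendByZero.linearMap (ZMod 2) (windowEmb k))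
      (LinearMap.injective_iff_surjective.mp this)
  rw [← LinearMap.ker_eq_bot, LinearMap.ker_eq_bot']
  intro u hu
  by_contra hu0
  obtain ⟨i₀, hui₀, hi₀⟩ := Fin.exists_last_ne_zero hu0
  have hrow := congrFun hu i₀
  rw [toeplitzMulVecₗ_extend_windowEmb_apply hk hi₀] at hrow
  exact mul_ne_zero hui₀ hzk hrow

theorem card_filter_toeplitz_mulVec_eq_zero_mul {z : Fin n → ZMod 2} (hz : z ≠ 0) :
    #{t | toeplitz m n t *ᵥ z = 0} * 2 ^ m = 2 ^ (m + n - 1) := by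
  set f := (toeplitzMulVecₗ m n z).toAddMonoidHom
  have h := f.ker.card_mul_index
  rw [AddSubgroup.index_ker, f.range_eq_top_of_surjective (toeplitzMulVecₗ_surjective hz),
    AddSubgroup.card_top] at h
  simp only [Nat.card_eq_fintype_card, Fintype.card_fun, ZMod.card, Fintype.card_fin] at h
  rw [← Fintype.card_subtype]
  convert h using 2
  exact Fintype.card_congr (Equiv.refl _)

theorem card_filter_add_eq_zero_and_add_eq_zero {T B : Type*} [Fintype T] [AddGroup B] [Fintype B]
    [DecidableEq B] (f g : T → B) :
    #{p : T × B | f p.1 + p.2 = 0 ∧ g p.1 + p.2 = 0} = #{t | f t = g t} := by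
  refine card_nbij' Prod.fst (fun t => (t, -f t)) ?_ ?_ ?_ ?_ <;>
    simp only [coe_filter, mem_univ, true_and]
  · rintro ⟨t, b⟩ ⟨hf, hg⟩
    rw [← eq_neg_iff_add_eq_zero] at hf hg
    exact hf.trans hg.symm
  · intro t (ht : f t = g t)
    simp [ht]
  · rintro ⟨t, b⟩ ⟨hf, -⟩
    rw [← eq_neg_iff_add_eq_zero] at hf
    simp [hf]
  · intro t _
    rfl

abbrev HashParams (m n : ℕ) := (Fin (m + n - 1) → ZMod 2) × (Fin m → ZMod 2)

theorem card_hashParams : Fintype.card (HashParams m n) = 2 ^ (m + n - 1) * 2 ^ m := by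
  simp [ZMod.card]

theorem card_filter_hashTB_eq_zero (x : Fin n → ZMod 2) :
    (#{p : HashParams m n | hashTB m n p.1 p.2 x = 0} : ℝ) =
      (2 ^ m)⁻¹ * Fintype.card (HashParams m n) := by
  have h := card_filter_add_eq_zero_and_add_eq_zero (B := Fin m → ZMod 2)
    (fun t => toeplitz m n t *ᵥ x) (fun t => toeplitz m n t *ᵥ x)
  simp only [and_self, filter_true, card_univ, Fintype.card_fun, ZMod.card, Fintype.card_fin] at h
  rw [show #{p : HashParams m n | hashTB m n p.1 p.2 x = 0} = 2 ^ (m + n - 1) from h,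
    card_hashParams]
  push_cast
  field_simp

theorem card_filter_hashTB_eq_zero_and_eq_zero {x y : Fin n → ZMod 2} (hxy : x ≠ y) :
    (#{p : HashParams m n | hashTB m n p.1 p.2 x = 0 ∧ hashTB m n p.1 p.2 y = 0} : ℝ) =
      (2 ^ m)⁻¹ ^ 2 * Fintype.card (HashParams m n) := by
  have h : #{p : HashParams m n | hashTB m n p.1 p.2 x = 0 ∧ hashTB m n p.1 p.2 y = 0} =
      #{t | toeplitz m n t *ᵥ x = toeplitz m n t *ᵥ y} :=
    card_filter_add_eq_zero_and_add_eq_zero (fun t => toeplitz m n t *ᵥ x)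
      (fun t => toeplitz m n t *ᵥ y)
  simp_rw [← sub_eq_zero (a := toeplitz m n _ *ᵥ x), ← mulVec_sub] at h
  have hker := card_filter_toeplitz_mulVec_eq_zero_mul (m := m) (sub_ne_zero.mpr hxy)
  rw [h, card_hashParams, ← hker]
  push_cast
  field_simp

end Toeplitz

theorem toeplitz_large_set_rarely_small_general (m n : ℕ)
    (S : Finset (Fin n → ZMod 2)) (hS : 2 ^ (m + 6) ≤ S.card) :
    ((Finset.univ.filter
        (fun p : (Fin (m + n - 1) → ZMod 2) × (Fin m → ZMod 2) =>
          (S.filter (fun x => hashTB m n p.1 p.2 x = 0)).card < 48)).card : ℝ)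
        / 2 ^ (n + 2 * m - 1)
      ≤ 2 ^ (m + 4) / (S.card : ℝ) ∧
    ((Finset.univ.filter
        (fun p : (Fin (m + n - 1) → ZMod 2) × (Fin m → ZMod 2) =>
          (S.filter (fun x => hashTB m n p.1 p.2 x = 0)).card < 48)).card : ℝ)
        / 2 ^ (n + 2 * m - 1)
      ≤ 1 / 4 := by
  have hμ : 64 ≤ (2 ^ m)⁻¹ * (#S : ℝ) := by
    rw [inv_mul_eq_div, le_div_iff₀ (by positivity), show (64 : ℝ) = 2 ^ 6 by norm_num, ← pow_add,
      add_comm]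
    exact_mod_cast hS
  have hN : (2 : ℝ) ^ (n + 2 * m - 1) = Fintype.card (HashParams m n) := by
    rw [card_hashParams, Nat.cast_mul, Nat.cast_pow, Nat.cast_pow, ← pow_add]
    norm_num
    omega
  have h16 : (2 : ℝ) ^ (m + 4) / #S = 16 / ((2 ^ m)⁻¹ * #S) := by
    rw [pow_add]
    field_simp
    norm_num
  have hfar := card_filter_le_three_quarters_mul_le (S := S) (by positivity)
    (fun x _ => card_filter_hashTB_eq_zero (m := m) x)
    (fun _ _ _ _ hxy => card_filter_hashTB_eq_zero_and_eq_zero (m := m) hxy)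
  set μ : ℝ := (2 ^ m)⁻¹ * #S
  rw [h16, hN]
  refine ⟨?bound, le_trans ?bound ?_⟩
  · rw [div_le_div_iff₀ (by positivity) (by positivity)]
    refine (mul_le_mul_of_nonneg_right ?_ (by positivity)).trans hfar
    refine Nat.cast_le.mpr (card_le_card (monotone_filter_right _ fun p _ hp => ?_))
    have hcount : (#{x ∈ S | hashTB m n p.1 p.2 x = 0} : ℝ) < 48 := by exact_mod_cast hp
    linarith
  · rw [div_le_div_iff₀ (by positivity) (by norm_num)]
    linarith

/-- If `|S| ≥ 2^(m+6)`, then the fraction of pairs `(t, b)` with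
`c_{t,b}(S) < 48` is at most `2^(m+4) / |S|`, and in particular at most
`1/4`. -/
theorem toeplitz_large_set_rarely_small (m n : ℕ) (hm : 1 ≤ m) (hn : 1 ≤ n)
    (S : Finset (Fin n → ZMod 2)) (hS : 2 ^ (m + 6) ≤ S.card) :
    ((Finset.univ.filter
        (fun p : (Fin (m + n - 1) → ZMod 2) × (Fin m → ZMod 2) =>
          (S.filter (fun x => hashTB m n p.1 p.2 x = 0)).card < 48)).card : ℝ)
        / 2 ^ (n + 2 * m - 1)
      ≤ 2 ^ (m + 4) / (S.card : ℝ) ∧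
    ((Finset.univ.filter
        (fun p : (Fin (m + n - 1) → ZMod 2) × (Fin m → ZMod 2) =>
          (S.filter (fun x => hashTB m n p.1 p.2 x = 0)).card < 48)).card : ℝ)
        / 2 ^ (n + 2 * m - 1)
      ≤ 1 / 4 :=
  toeplitz_large_set_rarely_small_general m n S hS
end

section
/- (Output amplitudes of the Clifford-plus-T model circuit.) Let n, ξ ≥ 1, let g : 𝔽₂ⁿ → 𝔽₂ and junk : 𝔽₂ⁿ → 𝔽₂^{n+ξ−1} be functions, and let f : 𝔽₂ⁿ → 𝔽₂ be an n-variable degree-2 polynomial over 𝔽₂. Identify the index set 𝔽₂^{n+ξ} both with 𝔽₂ⁿ × 𝔽₂^ξ (first n bits, last ξ bits) and with 𝔽₂ × 𝔽₂^{n+ξ−1} (first bit, remaining bits). Let U be a unitary 2^{n+ξ} × 2^{n+ξ} complex matrix such that U·e_{(x, 0^ξ)} = e_{(g(x), junk(x))} for every x ∈ 𝔽₂ⁿ. Let Z₁ = Z ⊗ I_{2^{n+ξ−1}} with Z = diag(1, −1) acting on the first qubit. Then the vector w = (H_n ⊗ I_{2^ξ})·(D_f ⊗ I_{2^ξ})·U†·Z₁·U·(H_n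 ⊗ I_{2^ξ})·e_{0^{n+ξ}} satisfies w_{(z, 0^ξ)} = gap((f+g)_z)/2ⁿ for every z ∈ 𝔽₂ⁿ, and w_{(z, s)} = 0 whenever s ∈ 𝔽₂^ξ is nonzero; consequently, measuring the first n qubits yields outcome z with probability p_z(f+g) = gap((f+g)_z)²/2^{2n}. -/
/-!
The first Hadamard layer prepares `2^{-n/2} Σ_x e_{(x, 0^ξ)}`. Each `e_{(x, 0^ξ)}` is an
eigenvector of `U† Z₁ U` with eigenvalue `(−1)^{g(x)}`: `U` sends it to `e_{(g(x), junk(x))}`,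
which `Z₁` multiplies by `(−1)^{g(x)}`, and `U† U = 1` uncomputes the garbage. `D_f ⊗ I`
adds the phase `(−1)^{f(x)}`, and the last Hadamards, which leave the ancillas untouched, turn
`2^{-n/2} Σ_x (−1)^{f(x)+g(x)} e_{(x, 0^ξ)}` into `2^{-n} gap((f+g)_z)` at `(z, 0^ξ)` and into
`0` at `(z, s)` for `s ≠ 0`.
-/

/-- `gap F = Σ_{x ∈ 𝔽₂ⁿ} (−1)^{F(x)}`. -/
def gap {n : ℕ} (F : (Fin n → ZMod 2) → ZMod 2) : ℤ :=
  ∑ x : Fin n → ZMod 2, if F x = 0 then 1 else -1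

/-- The matrix `H_n` with entries `(H_n)_{x,y} = (−1)^{x·y} / 2^{n/2}`. -/
noncomputable def Hmat (n : ℕ) :
    Matrix (Fin n → ZMod 2) (Fin n → ZMod 2) ℂ :=
  Matrix.of fun x y =>
    (if (∑ i, x i * y i : ZMod 2) = 0 then 1 else -1) / (Real.sqrt 2 : ℂ) ^ n

/-- The diagonal matrix `D_F` with entries `(D_F)_{x,x} = (−1)^{F(x)}`. -/
noncomputable def Dmat {n : ℕ} (F : (Fin n → ZMod 2) → ZMod 2) :
    Matrix (Fin n → ZMod 2) (Fin n → ZMod 2) ℂ :=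
  Matrix.diagonal fun x => if F x = 0 then 1 else -1

open Matrix

/-- Concatenation `𝔽₂ⁿ × 𝔽₂^ξ → 𝔽₂^{n+ξ}` (first `n` bits, last `ξ` bits). -/
def appendBits {n ξ : ℕ} (x : Fin n → ZMod 2) (s : Fin ξ → ZMod 2) :
    Fin (n + ξ) → ZMod 2 :=
  fun i => if h : i.val < n then x ⟨i.val, h⟩
    else s ⟨i.val - n, by have := i.isLt; omega⟩

/-- The identification `𝔽₂ × 𝔽₂^{N−1} → 𝔽₂^N` (first bit, remaining bits). -/
def consBit {N : ℕ} (a : ZMod 2) (r : Fin (N - 1) → ZMod 2) :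
    Fin N → ZMod 2 :=
  fun i => if h : i.val = 0 then a
    else r ⟨i.val - 1, by have := i.isLt; omega⟩

/-- The first `n` bits of `v ∈ 𝔽₂^{n+ξ}`. -/
def firstBits {n ξ : ℕ} (v : Fin (n + ξ) → ZMod 2) : Fin n → ZMod 2 :=
  fun i => v ⟨i.val, by have := i.isLt; omega⟩

/-- The last `ξ` bits of `v ∈ 𝔽₂^{n+ξ}`. -/
def lastBits {n ξ : ℕ} (v : Fin (n + ξ) → ZMod 2) : Fin ξ → ZMod 2 :=
  fun j => v ⟨n + j.val, by have := j.isLt; omega⟩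

/-- `H_n ⊗ I_{2^ξ}`, under the identification `𝔽₂^{n+ξ} ≅ 𝔽₂ⁿ × 𝔽₂^ξ`. -/
noncomputable def HnI (n ξ : ℕ) :
    Matrix (Fin (n + ξ) → ZMod 2) (Fin (n + ξ) → ZMod 2) ℂ :=
  Matrix.of fun v w =>
    Hmat n (firstBits v) (firstBits w) *
      (if lastBits v = lastBits w then 1 else 0)

/-- `D_f ⊗ I_{2^ξ}`, under the identification `𝔽₂^{n+ξ} ≅ 𝔽₂ⁿ × 𝔽₂^ξ`. -/
noncomputable def DfI (n ξ : ℕ) (f : (Fin n → ZMod 2) → ZMod 2) :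
    Matrix (Fin (n + ξ) → ZMod 2) (Fin (n + ξ) → ZMod 2) ℂ :=
  Matrix.of fun v w =>
    Dmat f (firstBits v) (firstBits w) *
      (if lastBits v = lastBits w then 1 else 0)

/-- `Z₁ = Z ⊗ I_{2^{n+ξ−1}}`: the gate `Z = diag(1, −1)` on the first qubit. -/
noncomputable def Zfirst (n ξ : ℕ) (h0 : 0 < n + ξ) :
    Matrix (Fin (n + ξ) → ZMod 2) (Fin (n + ξ) → ZMod 2) ℂ :=
  Matrix.diagonal fun v => if v ⟨0, h0⟩ = 0 then 1 else -1

/-- The output vector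
`w = (H_n ⊗ I_{2^ξ})·(D_f ⊗ I_{2^ξ})·U†·Z₁·U·(H_n ⊗ I_{2^ξ})·e_{0^{n+ξ}}`
of the Clifford-plus-T model circuit. -/
noncomputable def outVecT (n ξ : ℕ) (h0 : 0 < n + ξ)
    (f : (Fin n → ZMod 2) → ZMod 2)
    (U : Matrix (Fin (n + ξ) → ZMod 2) (Fin (n + ξ) → ZMod 2) ℂ) :
    (Fin (n + ξ) → ZMod 2) → ℂ :=
  (HnI n ξ * DfI n ξ f * Uᴴ * Zfirst n ξ h0 * U * HnI n ξ).mulVec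
    (Pi.single (0 : Fin (n + ξ) → ZMod 2) 1)

section Bits

variable {n ξ : ℕ}

@[simp]
lemma firstBits_appendBits (x : Fin n → ZMod 2) (s : Fin ξ → ZMod 2) :
    firstBits (appendBits x s) = x := by
  funext i
  simp [firstBits, appendBits]

@[simp]
lemma lastBits_appendBits (x : Fin n → ZMod 2) (s : Fin ξ → ZMod 2) :
    lastBits (appendBits x s) = s := by
  funext j
  simp [lastBits, appendBits]

lemma appendBits_firstBits_lastBits (v : Fin (n + ξ) → ZMod 2) :
    appendBits (firstBits v) (lastBits v) = v := by
  funext i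
  by_cases h : i.val < n
  · simp [appendBits, firstBits, h]
  · simp only [appendBits, firstBits, lastBits, dif_neg h]
    congr 1
    ext
    simp only
    omega

lemma exists_eq_appendBits (v : Fin (n + ξ) → ZMod 2) :
    ∃ x s, v = appendBits x s :=
  ⟨_, _, (appendBits_firstBits_lastBits v).symm⟩

lemma appendBits_inj {x y : Fin n → ZMod 2} {s t : Fin ξ → ZMod 2} :
    appendBits x s = appendBits y t ↔ x = y ∧ s = t := by
  refine ⟨fun h => ⟨?_, ?_⟩, fun ⟨hx, hs⟩ => hx ▸ hs ▸ rfl⟩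
  · simpa using congrArg firstBits h
  · simpa using congrArg lastBits h

lemma appendBits_zero : appendBits (0 : Fin n → ZMod 2) (0 : Fin ξ → ZMod 2) = 0 := by
  funext i
  simp [appendBits]

lemma consBit_apply_zero {N : ℕ} (h0 : 0 < N) (a : ZMod 2) (r : Fin (N - 1) → ZMod 2) :
    consBit a r ⟨0, h0⟩ = a := by
  simp [consBit]

end Bits

lemma ite_sign_add {R : Type*} [Ring R] (a b : ZMod 2) :
    (if a + b = 0 then (1 : R) else -1) =
      (if a = 0 then 1 else -1) * (if b = 0 then 1 else -1) := by
  have h : ∀ c : ZMod 2, c = 0 ∨ c = 1 := by decide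
  rcases h a with rfl | rfl <;> rcases h b with rfl | rfl <;>
    simp [show (1 + 1 : ZMod 2) = 0 by decide]

lemma sqrt_two_pow_mul_self (n : ℕ) : (√2 : ℂ) ^ n * (√2 : ℂ) ^ n = 2 ^ n := by
  rw [← mul_pow, ← Complex.ofReal_mul, Real.mul_self_sqrt zero_le_two]
  norm_num

namespace Matrix

variable {ι R : Type*} [Fintype ι]

lemma diagonal_mulVec_single_one [DecidableEq ι] [Semiring R] (d : ι → R) (i : ι) :
    diagonal d *ᵥ Pi.single i 1 = d i • Pi.single i 1 := by
  rw [diagonal_mulVec_single, ← smul_eq_mul, Pi.single_smul']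

lemma conjTranspose_mul_mul_mulVec_of_mulVec_eq_smul [DecidableEq ι] [CommSemiring R] [StarRing R]
    {U M : Matrix ι ι R} (hU : Uᴴ * U = 1) {x y : ι → R} {c : R}
    (hx : U *ᵥ x = y) (hy : M *ᵥ y = c • y) :
    (Uᴴ * M * U) *ᵥ x = c • x := by
  rw [← mulVec_mulVec, hx, ← mulVec_mulVec, hy, mulVec_smul, ← hx, mulVec_mulVec, hU,
    one_mulVec]

end Matrix

open Matrix

section Circuit

variable {n ξ : ℕ}

lemma HnI_apply_appendBits (z x : Fin n → ZMod 2) (s t : Fin ξ → ZMod 2) :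
    HnI n ξ (appendBits z s) (appendBits x t) = Hmat n z x * if s = t then 1 else 0 := by
  simp [HnI]

lemma HnI_mulVec_single_zero :
    HnI n ξ *ᵥ Pi.single 0 1 =
      ((√2 : ℂ) ^ n)⁻¹ •
        ∑ x : Fin n → ZMod 2, Pi.single (appendBits x (0 : Fin ξ → ZMod 2)) 1 := by
  ext v
  obtain ⟨z, s, rfl⟩ := exists_eq_appendBits v
  rw [mulVec_single_one, col_apply, ← appendBits_zero, HnI_apply_appendBits]
  simp [Hmat, Pi.single_apply, appendBits_inj, div_eq_inv_mul, ite_and, eq_comm]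

lemma DfI_eq_diagonal (f : (Fin n → ZMod 2) → ZMod 2) :
    DfI n ξ f = diagonal fun v => if f (firstBits v) = 0 then 1 else -1 := by
  ext v w
  obtain ⟨x, s, rfl⟩ := exists_eq_appendBits v
  obtain ⟨y, t, rfl⟩ := exists_eq_appendBits w
  by_cases hxy : x = y <;> simp [DfI, Dmat, diagonal_apply, appendBits_inj, hxy]

lemma DfI_mulVec_single_appendBits (f : (Fin n → ZMod 2) → ZMod 2) (x : Fin n → ZMod 2)
    (s : Fin ξ → ZMod 2) :
    DfI n ξ f *ᵥ Pi.single (appendBits x s) 1 =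
      (if f x = 0 then (1 : ℂ) else -1) • Pi.single (appendBits x s) 1 := by
  rw [DfI_eq_diagonal, diagonal_mulVec_single_one, firstBits_appendBits]

lemma Zfirst_mulVec_single_consBit (h0 : 0 < n + ξ) (a : ZMod 2)
    (r : Fin (n + ξ - 1) → ZMod 2) :
    Zfirst n ξ h0 *ᵥ Pi.single (consBit a r) 1 =
      (if a = 0 then (1 : ℂ) else -1) • Pi.single (consBit a r) 1 := by
  rw [Zfirst, diagonal_mulVec_single_one, consBit_apply_zero]

lemma DfI_mul_conj_Zfirst_mulVec_single (h0 : 0 < n + ξ) (f : (Fin n → ZMod 2) → ZMod 2)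
    {U : Matrix (Fin (n + ξ) → ZMod 2) (Fin (n + ξ) → ZMod 2) ℂ} (hU : Uᴴ * U = 1)
    {x : Fin n → ZMod 2} {s : Fin ξ → ZMod 2} {a : ZMod 2} {r : Fin (n + ξ - 1) → ZMod 2}
    (hUx : U *ᵥ Pi.single (appendBits x s) 1 = Pi.single (consBit a r) 1) :
    (DfI n ξ f * Uᴴ * Zfirst n ξ h0 * U) *ᵥ Pi.single (appendBits x s) 1 =
      (if f x + a = 0 then (1 : ℂ) else -1) • Pi.single (appendBits x s) 1 := by
  rw [Matrix.mul_assoc, Matrix.mul_assoc, ← Matrix.mul_assoc Uᴴ, ← mulVec_mulVec,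
    conjTranspose_mul_mul_mulVec_of_mulVec_eq_smul hU hUx (Zfirst_mulVec_single_consBit h0 a r),
    mulVec_smul, DfI_mulVec_single_appendBits, smul_smul, ite_sign_add, mul_comm]

lemma outVecT_eq_smul_sum (h0 : 0 < n + ξ) (g : (Fin n → ZMod 2) → ZMod 2)
    (junk : (Fin n → ZMod 2) → (Fin (n + ξ - 1) → ZMod 2))
    (f : (Fin n → ZMod 2) → ZMod 2)
    {U : Matrix (Fin (n + ξ) → ZMod 2) (Fin (n + ξ) → ZMod 2) ℂ} (hU : Uᴴ * U = 1)
    (hUact : ∀ x : Fin n → ZMod 2,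
      U *ᵥ Pi.single (appendBits x (0 : Fin ξ → ZMod 2)) 1 =
        Pi.single (consBit (g x) (junk x)) 1) :
    outVecT n ξ h0 f U = ((√2 : ℂ) ^ n)⁻¹ •
      ∑ x, (if f x + g x = 0 then (1 : ℂ) else -1) •
        HnI n ξ *ᵥ Pi.single (appendBits x (0 : Fin ξ → ZMod 2)) 1 := by
  have hassoc : HnI n ξ * DfI n ξ f * Uᴴ * Zfirst n ξ h0 * U * HnI n ξ =
      HnI n ξ * (DfI n ξ f * Uᴴ * Zfirst n ξ h0 * U) * HnI n ξ := by
    simp only [Matrix.mul_assoc]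
  rw [outVecT, hassoc, ← mulVec_mulVec, HnI_mulVec_single_zero, ← mulVec_mulVec, mulVec_smul,
    mulVec_sum, mulVec_smul, mulVec_sum]
  simp only [DfI_mul_conj_Zfirst_mulVec_single h0 f hU (hUact _), mulVec_smul]

lemma outVecT_apply_appendBits (h0 : 0 < n + ξ) (g : (Fin n → ZMod 2) → ZMod 2)
    (junk : (Fin n → ZMod 2) → (Fin (n + ξ - 1) → ZMod 2))
    (f : (Fin n → ZMod 2) → ZMod 2)
    {U : Matrix (Fin (n + ξ) → ZMod 2) (Fin (n + ξ) → ZMod 2) ℂ} (hU : Uᴴ * U = 1)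
    (hUact : ∀ x : Fin n → ZMod 2,
      U *ᵥ Pi.single (appendBits x (0 : Fin ξ → ZMod 2)) 1 =
        Pi.single (consBit (g x) (junk x)) 1)
    (z : Fin n → ZMod 2) (s : Fin ξ → ZMod 2) :
    outVecT n ξ h0 f U (appendBits z s) =
      if s = 0 then ((gap fun x => f x + g x + ∑ i, z i * x i : ℤ) : ℂ) / 2 ^ n else 0 := by
  have hc0 : (√2 : ℂ) ^ n ≠ 0 := pow_ne_zero _ (by simp)
  rw [outVecT_eq_smul_sum h0 g junk f hU hUact]
  simp only [Pi.smul_apply, Finset.sum_apply, mulVec_single_one, col_apply,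
    HnI_apply_appendBits, Hmat, of_apply, smul_eq_mul]
  split_ifs with hs
  · rw [gap, ← sqrt_two_pow_mul_self n, Int.cast_sum, Finset.mul_sum, Finset.sum_div]
    refine Finset.sum_congr rfl fun x _ => ?_
    rw [ite_sign_add (f x + g x)]
    field_simp
    push_cast
    ring
  · simp

end Circuit

/-- Output amplitudes of the Clifford-plus-T model circuit: if the unitary `U`
computes the Boolean function `g` with garbage `junk`, i.e.
`U e_{(x,0^ξ)} = e_{(g(x), junk(x))}`, and `f` is a degree-2 polynomial over
`𝔽₂`, then the vector
`w = (H_n ⊗ I_{2^ξ})·(D_f ⊗ I_{2^ξ})·U†·Z₁·U·(H_n ⊗ I_{2^ξ})·e_{0^{n+ξ}}`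
satisfies `w_{(z,0^ξ)} = gap((f+g)_z)/2ⁿ` and `w_{(z,s)} = 0` for `s ≠ 0`;
consequently measuring the first `n` qubits yields `z` with probability
`gap((f+g)_z)²/2^{2n}`. -/
theorem clifford_T_amplitude (n ξ : ℕ) (hξ : 1 ≤ ξ)
    (g : (Fin n → ZMod 2) → ZMod 2)
    (junk : (Fin n → ZMod 2) → (Fin (n + ξ - 1) → ZMod 2))
    (f : (Fin n → ZMod 2) → ZMod 2)
    (U : Matrix (Fin (n + ξ) → ZMod 2) (Fin (n + ξ) → ZMod 2) ℂ)
    (hU₁ : Uᴴ * U = 1)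
    (hUact : ∀ x : Fin n → ZMod 2,
      U.mulVec (Pi.single (appendBits x (0 : Fin ξ → ZMod 2)) 1) =
        (Pi.single (consBit (g x) (junk x)) 1 : (Fin (n + ξ) → ZMod 2) → ℂ)) :
    ∀ z : Fin n → ZMod 2,
      outVecT n ξ (by omega) f U (appendBits z (0 : Fin ξ → ZMod 2)) =
        ((gap (fun x => (f x + g x) + ∑ i, z i * x i) : ℤ) : ℂ) / 2 ^ n ∧
      (∀ s : Fin ξ → ZMod 2, s ≠ 0 →
        outVecT n ξ (by omega) f U (appendBits z s) = 0) ∧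
      (∑ s : Fin ξ → ZMod 2,
          ‖outVecT n ξ (by omega) f U (appendBits z s)‖ ^ 2) =
        ((gap (fun x => (f x + g x) + ∑ i, z i * x i) : ℝ)) ^ 2
          / 2 ^ (2 * n) := by
  intro z
  have hamp := outVecT_apply_appendBits (by omega) g junk f hU₁ hUact z
  have hzero : ∀ s : Fin ξ → ZMod 2, s ≠ 0 →
      outVecT n ξ (by omega) f U (appendBits z s) = 0 := fun s hs => by rw [hamp, if_neg hs]
  refine ⟨by rw [hamp, if_pos rfl], hzero, ?_⟩
  rw [Finset.sum_eq_single 0 (fun s _ hs => by rw [hzero s hs, norm_zero, zero_pow two_ne_zero])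
    (fun h => (h (Finset.mem_univ _)).elim), hamp, if_pos rfl]
  rw [norm_div, Complex.norm_intCast, norm_pow, Complex.norm_two, div_pow, sq_abs, ← pow_mul,
    mul_comm n 2]
end
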